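/- arXiv:1410.3040 — 3 statements merged into one kernel-verified Lean document; each statement's English description precedes it below -/
import Mathlib

section
/- Let c₀ denote the Banach space of real sequences converging to zero with the supremum norm, and let ξ : Ω → c₀ be a Borel-measurable random variable with values in c₀. Then there exists a strictly positive non-random sequence ε = (ε₁, ε₂, …) ∈ c₀ such that, setting η_n := ξ_n / ε_n, one has lim_{n→∞} η_n = 0 almost surely; equivalently, ξ_n = ε_n · η_n almost surely with η ∈ c₀ almost surely. -/
open MeasureTheory Filter ZeroAtInfty

/-- For any random variable `ξ` with values in `c₀` (real sequences tending to zero with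
the sup norm), there is a strictly positive deterministic sequence `ε ∈ c₀` such that
`η_n := ξ_n / ε_n` tends to zero almost surely. -/
theorem exists_pos_c0_sequence_div_tendsto_zero
    [MeasurableSpace C₀(ℕ, ℝ)] [BorelSpace C₀(ℕ, ℝ)]
    {Ω : Type*} [MeasurableSpace Ω] (P : Measure Ω) [IsProbabilityMeasure P]
    (ξ : Ω → C₀(ℕ, ℝ)) (hξ : Measurable ξ) :
    ∃ ε : ℕ → ℝ, (∀ n, 0 < ε n) ∧ Tendsto ε atTop (nhds 0) ∧
      ∀ᵐ ω ∂P, Tendsto (fun n => ξ ω n / ε n) atTop (nhds 0) := by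
  classical
  -- evaluation maps are measurable
  have heval : ∀ n : ℕ, Measurable fun ω => ξ ω n := by
    intro n
    have h : LipschitzWith 1 fun x : C₀(ℕ, ℝ) => x n := by
      intro x y
      simp only [ENNReal.coe_one, one_mul, edist_dist]
      apply ENNReal.ofReal_le_ofReal
      calc dist (x n) (y n) = dist (x.toBCF n) (y.toBCF n) := rfl
        _ ≤ dist x.toBCF y.toBCF := BoundedContinuousFunction.dist_coe_le_dist n
        _ = dist x y := ZeroAtInftyContinuousMap.dist_toBCF_eq_dist
    exact h.continuous.measurable.comp hξ
  -- the good sets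
  set A : ℕ → ℕ → Set Ω := fun k m => {ω | ∀ n, m ≤ n → |ξ ω n| ≤ (4:ℝ)⁻¹ ^ k} with hA
  have hAmeas : ∀ k m, MeasurableSet (A k m) := by
    intro k m
    have hrw : A k m = ⋂ n, {ω | m ≤ n → |ξ ω n| ≤ (4:ℝ)⁻¹ ^ k} := by
      ext ω; simp [hA, Set.mem_iInter]
    rw [hrw]
    refine MeasurableSet.iInter fun n => ?_
    by_cases h : m ≤ n
    · simp only [h, true_implies]
      exact measurableSet_le (heval n).abs measurable_const
    · simp [h]
  have hAmono : ∀ k, Monotone (A k) := fun k m m' hmm' ω hω n hn => hω n (hmm'.trans hn)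
  have hAunion : ∀ k, (⋃ m, A k m) = Set.univ := by
    intro k
    ext ω
    simp only [Set.mem_iUnion, Set.mem_univ, iff_true]
    have hx : Tendsto (ξ ω) atTop (nhds 0) := by
      have := zero_at_infty (ξ ω)
      rwa [cocompact_eq_cofinite, Nat.cofinite_eq_atTop] at this
    have hpos : (0:ℝ) < (4:ℝ)⁻¹ ^ k := by positivity
    have hev : ∀ᶠ n in atTop, ξ ω n ∈ Metric.closedBall (0:ℝ) ((4:ℝ)⁻¹ ^ k) :=
      hx.eventually (Metric.closedBall_mem_nhds 0 hpos)
    obtain ⟨m, hm⟩ := eventually_atTop.1 hev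
    refine ⟨m, fun n hn => ?_⟩
    have := hm n hn
    rwa [Metric.mem_closedBall, Real.dist_eq, sub_zero] at this
  -- choose M k with small complement probability
  have hM : ∀ k : ℕ, ∃ m, P ((A k m)ᶜ) < (2:ENNReal)⁻¹ ^ k := by
    intro k
    have hanti : Antitone fun m => (A k m)ᶜ := fun m m' h => Set.compl_subset_compl.2 (hAmono k h)
    have hiter : (⋂ m, (A k m)ᶜ) = ∅ := by
      rw [← Set.compl_iUnion, hAunion k, Set.compl_univ]
    have htend : Tendsto (fun m => P ((A k m)ᶜ)) atTop (nhds 0) := by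
      have := tendsto_measure_iInter_atTop (μ := P) (s := fun m => (A k m)ᶜ)
        (fun m => (hAmeas k m).compl.nullMeasurableSet) hanti
        ⟨0, (measure_lt_top P _).ne⟩
      rwa [hiter, measure_empty] at this
    have hpos : (0:ENNReal) < (2:ENNReal)⁻¹ ^ k := by
      apply ENNReal.pow_pos
      simp
    exact (htend.eventually_lt_const hpos).exists
  choose M hMlt using hM
  -- the increasing sequence N
  set N : ℕ → ℕ := fun k => k + (Finset.range (k + 1)).sup M with hN
  have hNmono : StrictMono N := by
    apply strictMono_nat_of_lt_succ
    intro k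
    have : (Finset.range (k + 1)).sup M ≤ (Finset.range (k + 1 + 1)).sup M :=
      Finset.sup_mono (Finset.range_subset_range.2 (Nat.le_succ (k+1)))
    simp only [hN]
    omega
  have hNM : ∀ k, M k ≤ N k := by
    intro k
    have : M k ≤ (Finset.range (k + 1)).sup M :=
      Finset.le_sup (Finset.mem_range.2 (Nat.lt_succ_self k))
    simp only [hN]
    omega
  -- Borel-Cantelli
  have hsum : (∑' k, P ((A k (N k))ᶜ)) ≠ ⊤ := by
    have hle : ∀ k, P ((A k (N k))ᶜ) ≤ (2:ENNReal)⁻¹ ^ k := fun k =>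
      le_trans (measure_mono (Set.compl_subset_compl.2 (hAmono k (hNM k)))) (hMlt k).le
    have : (∑' k, P ((A k (N k))ᶜ)) ≤ ∑' k, (2:ENNReal)⁻¹ ^ k := ENNReal.tsum_le_tsum hle
    refine ne_top_of_le_ne_top ?_ this
    rw [ENNReal.tsum_geometric]
    simp [ENNReal.sub_eq_of_eq_add]
  have hae : ∀ᵐ ω ∂P, ∀ᶠ k in atTop, ω ∉ (A k (N k))ᶜ :=
    MeasureTheory.ae_eventually_notMem hsum
  -- define φ and ε
  set φ : ℕ → ℕ := fun n => Nat.findGreatest (fun k => N k ≤ n) n with hφ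
  have hφtop : Tendsto φ atTop atTop := by
    rw [tendsto_atTop_atTop]
    intro K
    refine ⟨N K, fun n hn => ?_⟩
    exact Nat.le_findGreatest ((hNmono.le_apply).trans hn) hn
  refine ⟨fun n => (2:ℝ)⁻¹ ^ φ n, fun n => by positivity, ?_, ?_⟩
  · exact (tendsto_pow_atTop_nhds_zero_of_lt_one (by norm_num) (by norm_num)).comp hφtop
  · filter_upwards [hae] with ω hω
    obtain ⟨K, hK⟩ := eventually_atTop.1 hω
    set K' := max K 1 with hK'
    refine squeeze_zero_norm' ?_
      ((tendsto_pow_atTop_nhds_zero_of_lt_one (r := (2:ℝ)⁻¹) (by norm_num) (by norm_num)).comp hφtop)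
    · rw [eventually_atTop]
      refine ⟨N K', fun n hn => ?_⟩
      have hK'n : K' ≤ n := hNmono.le_apply.trans hn
      have hKφ : K' ≤ φ n := Nat.le_findGreatest hK'n hn
      have hspec : N (φ n) ≤ n := Nat.findGreatest_spec (P := fun k => N k ≤ n) hK'n hn
      have hωA : ω ∈ A (φ n) (N (φ n)) := by
        have := hK (φ n) (le_trans (le_max_left K 1) hKφ)
        simpa using this
      have hbound : |ξ ω n| ≤ (4:ℝ)⁻¹ ^ φ n := hωA n hspec
      have hb : (0:ℝ) < (2:ℝ)⁻¹ ^ φ n := by positivity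
      rw [Real.norm_eq_abs, abs_div, abs_of_pos hb, div_le_iff₀ hb]
      calc |ξ ω n| ≤ (4:ℝ)⁻¹ ^ φ n := hbound
        _ = (2:ℝ)⁻¹ ^ φ n * (2:ℝ)⁻¹ ^ φ n := by
            rw [← mul_pow]; norm_num
end

section
/- Let c₀ denote the Banach space of real sequences converging to zero with the supremum norm, and let ξ : Ω → c₀ be a Borel-measurable random variable with values in c₀. Then there exists a compact injective bounded linear operator U : c₀ → c₀, namely a diagonal operator U((x₁, x₂, …)) = (ε₁ x₁, ε₂ x₂, …) for some strictly positive non-random sequence (ε_n) tending to zero, such that ξ belongs to the range of U with probability one. -/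
/-!
Pick thresholds `N k` such that, outside an event of probability at most `2⁻ᵏ`, all coordinates
of `ξ` beyond `N k` are at most `4⁻ᵏ` (Egorov). By Borel–Cantelli almost every `ξ ω` eventually
satisfies all these bounds, so `ξ ω n` is `O(4⁻ᵏ)` for `n` between consecutive thresholds, and
dividing by `εₙ = 2⁻ᵏ` there still leaves a null sequence. The diagonal operator with entries `εₙ`
is compact, being the norm limit of its finite-rank truncations.
-/

open MeasureTheory Filter ZeroAtInfty Topology

theorem ContinuousLinearMap.isCompactOperator_of_finiteDimensional_range {𝕜 E F : Type*}
    [NontriviallyNormedField 𝕜] [LocallyCompactSpace 𝕜] [NormedAddCommGroup E] [NormedSpace 𝕜 E]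
    [NormedAddCommGroup F] [NormedSpace 𝕜 F] (f : E →L[𝕜] F)
    [FiniteDimensional 𝕜 (LinearMap.range (f : E →ₗ[𝕜] F))] : IsCompactOperator f :=
  have := FiniteDimensional.proper 𝕜 (LinearMap.range (f : E →ₗ[𝕜] F))
  (isCompactOperator_of_locallyCompactSpace_dom f.rangeRestrict).continuous_comp
    continuous_subtype_val

namespace ZeroAtInftyContinuousMap

instance {α β : Type*} [TopologicalSpace α] [PseudoMetricSpace β] [Zero β] :
    ContinuousEvalConst C₀(α, β) α β where
  continuous_eval_const x :=
    (continuous_eval_const (F := BoundedContinuousFunction α β) x).comp isometry_toBCF.continuous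

/-- On `ℕ` the cocompact filter is `atTop`, so `C₀(ℕ, ℝ)` is the space of null sequences. -/
def ofTendstoAtTop (f : ℕ → ℝ) (hf : Tendsto f atTop (𝓝 0)) : C₀(ℕ, ℝ) :=
  ⟨⟨f, continuous_of_discreteTopology⟩, by rwa [cocompact_eq_atTop]⟩

@[simp]
theorem ofTendstoAtTop_apply (f : ℕ → ℝ) (hf : Tendsto f atTop (𝓝 0)) (n : ℕ) :
    ofTendstoAtTop f hf n = f n :=
  rfl

theorem tendsto_atTop (f : C₀(ℕ, ℝ)) : Tendsto f atTop (𝓝 0) := by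
  have := f.zero_at_infty'
  rwa [cocompact_eq_atTop] at this

def truncate (N : ℕ) (f : C₀(ℕ, ℝ)) : C₀(ℕ, ℝ) :=
  ofTendstoAtTop (fun n => if n < N then f n else 0) <| tendsto_const_nhds.congr' <|
    (eventually_ge_atTop N).mono fun _ hn => (if_neg (not_lt.2 hn)).symm

theorem tendsto_truncate (f : C₀(ℕ, ℝ)) : Tendsto (fun N => truncate N f) atTop (𝓝 f) := by
  rw [tendsto_iff_tendstoUniformly, Metric.tendstoUniformly_iff]
  intro δ hδ
  filter_upwards [eventually_forall_ge_atTop.2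
    (f.tendsto_atTop.eventually (Metric.ball_mem_nhds 0 hδ))] with N hN n
  by_cases hn : n < N
  · simpa [truncate, hn] using hδ
  · simpa [truncate, hn, dist_comm] using hN n (not_lt.1 hn)

theorem mul_right_injective_of_forall_ne_zero {α β : Type*} [TopologicalSpace α]
    [TopologicalSpace β] [MulZeroClass β] [ContinuousMul β] [IsLeftCancelMulZero β]
    {e : C₀(α, β)} (he : ∀ x, e x ≠ 0) : Function.Injective (e * ·) :=
  fun _ _ h => ext fun x => mul_left_cancel₀ (he x) (DFunLike.congr_fun h x)

def supportedBelow (N : ℕ) : Submodule ℝ C₀(ℕ, ℝ) where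
  carrier := {f | ∀ n, N ≤ n → f n = 0}
  add_mem' hf hg n hn := by simp [hf n hn, hg n hn]
  zero_mem' _ _ := rfl
  smul_mem' c f hf n hn := by simp [hf n hn]

instance (N : ℕ) : FiniteDimensional ℝ (supportedBelow N) := by
  let restrict : supportedBelow N →ₗ[ℝ] (Fin N → ℝ) :=
    { toFun := fun f i => (f : C₀(ℕ, ℝ)) i
      map_add' := fun _ _ => rfl
      map_smul' := fun _ _ => rfl }
  refine Module.Finite.of_injective restrict fun f g hfg => Subtype.ext <| ext fun n => ?_
  by_cases hn : n < N
  · exact congrFun hfg ⟨n, hn⟩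
  · rw [f.2 n (not_lt.1 hn), g.2 n (not_lt.1 hn)]

theorem isCompactOperator_mul (e : C₀(ℕ, ℝ)) :
    IsCompactOperator (ContinuousLinearMap.mul ℝ C₀(ℕ, ℝ) e) := by
  refine isCompactOperator_of_tendsto
    (((ContinuousLinearMap.mul ℝ C₀(ℕ, ℝ)).continuous.tendsto e).comp e.tendsto_truncate)
    (Eventually.of_forall fun N => ?_)
  have hrange : LinearMap.range
      (ContinuousLinearMap.mul ℝ C₀(ℕ, ℝ) (truncate N e) : C₀(ℕ, ℝ) →ₗ[ℝ] C₀(ℕ, ℝ)) ≤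
      supportedBelow N := by
    rintro _ ⟨x, rfl⟩ n hn
    simp [truncate, mul_apply, not_lt.2 hn]
  have := Submodule.finiteDimensional_of_le hrange
  exact ContinuousLinearMap.isCompactOperator_of_finiteDimensional_range
    (ContinuousLinearMap.mul ℝ C₀(ℕ, ℝ) (truncate N e))

end ZeroAtInftyContinuousMap

section DeterministicRate

variable {N : ℕ → ℕ} {k n : ℕ}

/-- The largest `k ≤ n` with `N k ≤ n`, or `0` if there is none. -/
def lastThreshold (N : ℕ → ℕ) (n : ℕ) : ℕ :=
  Nat.findGreatest (fun k => N k ≤ n) n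

theorem le_lastThreshold (hk : k ≤ N k) (hn : N k ≤ n) : k ≤ lastThreshold N n :=
  Nat.le_findGreatest (hk.trans hn) hn

theorem threshold_lastThreshold_le (hk : k ≤ N k) (hn : N k ≤ n) :
    N (lastThreshold N n) ≤ n :=
  Nat.findGreatest_spec (P := fun j => N j ≤ n) (hk.trans hn) hn

theorem tendsto_lastThreshold (hN : ∀ k, k ≤ N k) : Tendsto (lastThreshold N) atTop atTop :=
  tendsto_atTop_atTop.2 fun k => ⟨N k, fun _ hn => le_lastThreshold (hN k) hn⟩

theorem tendsto_half_pow_lastThreshold (hN : ∀ k, k ≤ N k) :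
    Tendsto (fun n => (1 / 2 : ℝ) ^ lastThreshold N n) atTop (𝓝 0) :=
  (tendsto_pow_atTop_nhds_zero_of_lt_one (by norm_num) (by norm_num)).comp
    (tendsto_lastThreshold hN)

theorem tendsto_div_half_pow_lastThreshold (hN : ∀ k, k ≤ N k) {x : ℕ → ℝ}
    (hx : ∀ᶠ k in atTop, ∀ n, N k ≤ n → |x n| ≤ (1 / 4) ^ k) :
    Tendsto (fun n => x n / (1 / 2) ^ lastThreshold N n) atTop (𝓝 0) := by
  obtain ⟨K, hK⟩ := eventually_atTop.1 hx
  refine squeeze_zero_norm' ?_ (tendsto_half_pow_lastThreshold hN)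
  filter_upwards [eventually_ge_atTop (N K)] with n hn
  have hxn : |x n| ≤ (1 / 4) ^ lastThreshold N n :=
    hK _ (le_lastThreshold (hN K) hn) n (threshold_lastThreshold_le (hN K) hn)
  have hpos : (0 : ℝ) < (1 / 2) ^ lastThreshold N n := by positivity
  rw [Real.norm_eq_abs, abs_div, abs_of_pos hpos, div_le_iff₀ hpos, ← mul_pow]
  norm_num [hxn]

end DeterministicRate

section AlmostSureRate

variable {Ω : Type*} [MeasurableSpace Ω] {μ : Measure Ω} [IsFiniteMeasure μ] {X : ℕ → Ω → ℝ}

theorem exists_thresholds_ae_eventually_abs_le (hX : ∀ n, StronglyMeasurable (X n))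
    (hlim : ∀ᵐ ω ∂μ, Tendsto (fun n => X n ω) atTop (𝓝 0)) {δ : ℕ → ℝ} (hδ : ∀ k, 0 < δ k) :
    ∃ N : ℕ → ℕ, (∀ k, k ≤ N k) ∧
      ∀ᵐ ω ∂μ, ∀ᶠ k in atTop, ∀ n, N k ≤ n → |X n ω| ≤ δ k := by
  have hegorov (k : ℕ) : ∃ t : Set Ω, μ t ≤ ENNReal.ofReal ((1 / 2) ^ k) ∧
      ∃ N, k ≤ N ∧ ∀ n, N ≤ n → ∀ ω ∉ t, |X n ω| ≤ δ k := by
    obtain ⟨t, -, ht, hunif⟩ := tendstoUniformlyOn_of_ae_tendsto' hX stronglyMeasurable_const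
      hlim (by positivity : (0 : ℝ) < (1 / 2) ^ k)
    have hev := eventually_forall_ge_atTop.2 (Metric.tendstoUniformlyOn_iff.1 hunif _ (hδ k))
    obtain ⟨N, hN, hkN⟩ := (hev.and (eventually_ge_atTop k)).exists
    exact ⟨t, ht, N, hkN, fun n hn ω hω => by simpa using (hN n hn ω hω).le⟩
  choose t ht N hkN hN using hegorov
  have hsum : ∑' k, μ (t k) ≠ ⊤ := by
    refine ne_top_of_le_ne_top ?_ (ENNReal.tsum_le_tsum ht)
    rw [← ENNReal.ofReal_tsum_of_nonneg (fun k => by positivity) summable_geometric_two]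
    exact ENNReal.ofReal_ne_top
  refine ⟨N, hkN, ?_⟩
  filter_upwards [ae_eventually_notMem hsum] with ω hω
  exact hω.mono fun k hk n hn => hN k n hn ω hk

theorem exists_pos_tendsto_zero_ae_tendsto_div (hX : ∀ n, StronglyMeasurable (X n))
    (hlim : ∀ᵐ ω ∂μ, Tendsto (fun n => X n ω) atTop (𝓝 0)) :
    ∃ ε : ℕ → ℝ, (∀ n, 0 < ε n) ∧ Tendsto ε atTop (𝓝 0) ∧
      ∀ᵐ ω ∂μ, Tendsto (fun n => X n ω / ε n) atTop (𝓝 0) := by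
  obtain ⟨N, hkN, hN⟩ := exists_thresholds_ae_eventually_abs_le hX hlim
    (δ := fun k => (1 / 4) ^ k) fun k => by positivity
  refine ⟨_, fun n => by positivity, tendsto_half_pow_lastThreshold hkN, ?_⟩
  filter_upwards [hN] with ω hω
  exact tendsto_div_half_pow_lastThreshold hkN hω

end AlmostSureRate

open ZeroAtInftyContinuousMap

/-- For any random variable `ξ` with values in `c₀`, there is a diagonal compact injective
bounded linear operator `U` on `c₀`, given by multiplication by a strictly positive
sequence tending to zero, such that `ξ` lies in the range of `U` almost surely. -/
theorem exists_diagonal_compact_operator_range_ae_c0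
    [MeasurableSpace C₀(ℕ, ℝ)] [BorelSpace C₀(ℕ, ℝ)]
    {Ω : Type*} [MeasurableSpace Ω] (P : Measure Ω) [IsProbabilityMeasure P]
    (ξ : Ω → C₀(ℕ, ℝ)) (hξ : Measurable ξ) :
    ∃ (ε : ℕ → ℝ) (U : C₀(ℕ, ℝ) →L[ℝ] C₀(ℕ, ℝ)),
      (∀ n, 0 < ε n) ∧ Tendsto ε atTop (nhds 0) ∧
      (∀ x : C₀(ℕ, ℝ), ∀ n, U x n = ε n * x n) ∧
      IsCompactOperator U ∧ Function.Injective U ∧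
      ∀ᵐ ω ∂P, ∃ y : C₀(ℕ, ℝ), ξ ω = U y := by
  obtain ⟨ε, hε_pos, hε_lim, hdiv⟩ := exists_pos_tendsto_zero_ae_tendsto_div (μ := P)
    (X := fun n ω => ξ ω n)
    (fun n => ((continuous_eval_const n).measurable.comp hξ).stronglyMeasurable)
    (ae_of_all _ fun ω => (ξ ω).tendsto_atTop)
  let e := ofTendstoAtTop ε hε_lim
  refine ⟨ε, ContinuousLinearMap.mul ℝ C₀(ℕ, ℝ) e, hε_pos, hε_lim, fun _ _ => rfl,
    isCompactOperator_mul e, mul_right_injective_of_forall_ne_zero fun n => (hε_pos n).ne', ?_⟩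
  filter_upwards [hdiv] with ω hω
  exact ⟨ofTendstoAtTop _ hω, ext fun n => (mul_div_cancel₀ _ (hε_pos n).ne').symm⟩
end

section
/- Let Y be a Banach space (not necessarily separable) and let c₀(Y) denote the Banach space of all sequences (y₁, y₂, …) of elements of Y with lim_{n→∞} ‖y_n‖_Y = 0, equipped with the supremum norm. Let ξ : Ω → c₀(Y) be a Borel-measurable random variable with values in c₀(Y) such that ξ takes values in a separable subset almost surely. Then there exists a strictly positive non-random sequence (ε_n) tending to zero such that the diagonal operator U((y₁, y₂, …)) = (ε₁ y₁, ε₂ y₂, …) on c₀(Y) satisfies: ξ belongs to the range of U with probability one. -/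
open MeasureTheory Filter ZeroAtInfty ZeroAtInftyContinuousMap
open scoped ENNReal

set_option linter.unusedSectionVars false

section Aux

variable {Y : Type*} [NormedAddCommGroup Y] [NormedSpace ℝ Y]

/-- Build an element of `C₀(ℕ, Y)` from a sequence tending to zero. -/
noncomputable def ExistsDiag.mk0 (f : ℕ → Y) (hf : Tendsto f atTop (nhds 0)) : C₀(ℕ, Y) :=
  ⟨⟨f, continuous_of_discreteTopology⟩, by rwa [cocompact_eq_atTop]⟩

@[simp] lemma ExistsDiag.mk0_apply (f : ℕ → Y) (hf : Tendsto f atTop (nhds 0)) (n : ℕ) :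
    ExistsDiag.mk0 f hf n = f n := rfl

lemma ExistsDiag.tendsto_apply (y : C₀(ℕ, Y)) :
    Tendsto (fun n => y n) atTop (nhds 0) := by
  have := zero_at_infty y
  rwa [cocompact_eq_atTop] at this

lemma ExistsDiag.norm_apply_le (y : C₀(ℕ, Y)) (n : ℕ) : ‖y n‖ ≤ ‖y‖ := by
  rw [← norm_toBCF_eq_norm]
  exact BoundedContinuousFunction.norm_coe_le_norm y.toBCF n

/-- The diagonal operator on `C₀(ℕ, Y)` given by a bounded sequence of scalars. -/
noncomputable def ExistsDiag.diag (ε : ℕ → ℝ) (hε : ∀ n, |ε n| ≤ 1) :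
    C₀(ℕ, Y) →L[ℝ] C₀(ℕ, Y) :=
  LinearMap.mkContinuous
    { toFun := fun y => ExistsDiag.mk0 (fun n => ε n • y n) (by
        have hbnd : Tendsto (fun n => ‖y n‖) atTop (nhds 0) := by
          simpa using (ExistsDiag.tendsto_apply y).norm
        refine squeeze_zero_norm (fun n => ?_) hbnd
        rw [norm_smul]
        calc ‖ε n‖ * ‖y n‖ ≤ 1 * ‖y n‖ :=
              mul_le_mul_of_nonneg_right (by simpa [Real.norm_eq_abs] using hε n)
                (norm_nonneg _)
          _ = ‖y n‖ := one_mul _)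
      map_add' := fun y z => by
        ext n
        simp only [ExistsDiag.mk0_apply, coe_add, Pi.add_apply, smul_add]
      map_smul' := fun c y => by
        ext n
        simp only [ExistsDiag.mk0_apply, coe_smul, Pi.smul_apply, RingHom.id_apply]
        rw [smul_comm] }
    1 (fun y => by
      rw [one_mul, ← norm_toBCF_eq_norm]
      refine (BoundedContinuousFunction.norm_le (norm_nonneg y)).2 fun n => ?_
      show ‖ε n • y n‖ ≤ ‖y‖
      rw [norm_smul]
      calc ‖ε n‖ * ‖y n‖ ≤ 1 * ‖y n‖ :=
            mul_le_mul_of_nonneg_right (by simpa [Real.norm_eq_abs] using hε n)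
              (norm_nonneg _)
        _ = ‖y n‖ := one_mul _
        _ ≤ ‖y‖ := ExistsDiag.norm_apply_le y n)

@[simp] lemma ExistsDiag.diag_apply (ε : ℕ → ℝ) (hε : ∀ n, |ε n| ≤ 1) (y : C₀(ℕ, Y)) (n : ℕ) :
    ExistsDiag.diag ε hε y n = ε n • y n := rfl

end Aux

/-- For a Banach space `Y` (not necessarily separable) and a random variable `ξ` with values
in `c₀(Y)` (sequences in `Y` tending to zero in norm, sup norm) that takes values in a
separable subset almost surely, there is a strictly positive sequence `(ε_n)` tending to zero
such that the diagonal operator `U : (y_n) ↦ (ε_n • y_n)` on `c₀(Y)` satisfies: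
`ξ` lies in the range of `U` almost surely. -/
theorem exists_diagonal_operator_range_ae_c0_of_banach
    {Y : Type*} [NormedAddCommGroup Y] [NormedSpace ℝ Y] [CompleteSpace Y]
    [MeasurableSpace C₀(ℕ, Y)] [BorelSpace C₀(ℕ, Y)]
    {Ω : Type*} [MeasurableSpace Ω] (P : Measure Ω) [IsProbabilityMeasure P]
    (ξ : Ω → C₀(ℕ, Y)) (hξ : Measurable ξ)
    (hsep : ∃ s : Set C₀(ℕ, Y), TopologicalSpace.IsSeparable s ∧ ∀ᵐ ω ∂P, ξ ω ∈ s) :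
    ∃ (ε : ℕ → ℝ) (U : C₀(ℕ, Y) →L[ℝ] C₀(ℕ, Y)),
      (∀ n, 0 < ε n) ∧ Tendsto ε atTop (nhds 0) ∧
      (∀ y : C₀(ℕ, Y), ∀ n, U y n = ε n • y n) ∧
      ∀ᵐ ω ∂P, ∃ y : C₀(ℕ, Y), ξ ω = U y := by
  classical
  -- evaluation at `n` is measurable
  have hmeasn : ∀ n : ℕ, Measurable fun ω => ‖ξ ω n‖ := by
    intro n
    have hlip : LipschitzWith 1 (fun f : C₀(ℕ, Y) => ‖f n‖) := by
      refine LipschitzWith.of_dist_le_mul fun f g => ?_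
      rw [NNReal.coe_one, one_mul]
      calc dist ‖f n‖ ‖g n‖ ≤ dist (f n) (g n) := by
            rw [Real.dist_eq, dist_eq_norm]
            exact abs_norm_sub_norm_le _ _
        _ ≤ dist f g := by
            rw [← dist_toBCF_eq_dist]
            exact BoundedContinuousFunction.dist_coe_le_dist (f := f.toBCF) (g := g.toBCF) n
    exact (hlip.continuous.measurable).comp hξ
  set b : ℕ → ℝ := fun k => (2⁻¹ : ℝ) ^ k with hb
  have hbpos : ∀ k, 0 < b k := fun k => pow_pos (by norm_num) k
  -- the bad sets
  set S : ℕ → ℕ → Set Ω := fun k N => {ω | ∃ n, N ≤ n ∧ b k < ‖ξ ω n‖} with hS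
  have hSmeas : ∀ k N, MeasurableSet (S k N) := by
    intro k N
    have : S k N = ⋃ n, ⋃ (_ : N ≤ n), {ω | b k < ‖ξ ω n‖} := by
      ext ω; simp [hS]
    rw [this]
    exact MeasurableSet.iUnion fun n => MeasurableSet.iUnion fun _ =>
      measurableSet_lt measurable_const (hmeasn n)
  have hSanti : ∀ k, Antitone (S k) := by
    intro k N M hNM ω hω
    obtain ⟨n, hn, hlt⟩ := hω
    exact ⟨n, le_trans hNM hn, hlt⟩
  have hSempty : ∀ k, (⋂ N, S k N) = ∅ := by
    intro k
    ext ω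
    simp only [Set.mem_iInter, Set.mem_empty_iff_false, iff_false, not_forall]
    have h0 : Tendsto (fun n => ‖ξ ω n‖) atTop (nhds 0) := by
      simpa using (ExistsDiag.tendsto_apply (ξ ω)).norm
    obtain ⟨N, hN⟩ := eventually_atTop.1 (h0.eventually (gt_mem_nhds (hbpos k)))
    exact ⟨N, fun h => by obtain ⟨n, hn, hlt⟩ := h; exact absurd (hN n hn) (not_lt.2 hlt.le)⟩
  -- choose tail indices with small probability of bad events
  have hchoice : ∀ k, ∃ N, P (S k N) < (2⁻¹ : ℝ≥0∞) ^ k := by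
    intro k
    have htend : Tendsto (P ∘ S k) atTop (nhds (P (⋂ N, S k N))) :=
      tendsto_measure_iInter_atTop (fun N => (hSmeas k N).nullMeasurableSet) (hSanti k)
        ⟨0, measure_ne_top P _⟩
    rw [hSempty k, measure_empty] at htend
    have hpos : (0 : ℝ≥0∞) < (2⁻¹ : ℝ≥0∞) ^ k :=
      ENNReal.pow_pos (ENNReal.inv_pos.mpr ENNReal.ofNat_ne_top) k
    exact (htend.eventually (gt_mem_nhds hpos)).exists
  choose N hN using hchoice
  -- strictly increasing version
  set N' : ℕ → ℕ := fun k => Nat.rec 0 (fun k ih => max (N (k + 1)) (ih + 1)) k with hN'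
  have hN'zero : N' 0 = 0 := rfl
  have hN'succ : ∀ k, N' (k + 1) = max (N (k + 1)) (N' k + 1) := fun k => rfl
  have hN'mono : StrictMono N' := strictMono_nat_of_lt_succ fun k => by
    rw [hN'succ]; exact lt_of_lt_of_le (Nat.lt_succ_self _) (le_max_right _ _)
  have hN'ge : ∀ k, k ≤ N' k := fun k => hN'mono.le_apply
  set T : ℕ → Set Ω := fun k => S k (N' k) with hT
  have hTbound : ∀ k, P (T k) ≤ (2⁻¹ : ℝ≥0∞) ^ k := by
    intro k
    cases k with
    | zero => simpa using prob_le_one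
    | succ k =>
        refine le_trans (measure_mono (hSanti _ ?_)) (hN (k + 1)).le
        rw [hN'succ]; exact le_max_left _ _
  have hsum : (∑' k, P (T k)) ≠ ⊤ := by
    refine ne_top_of_le_ne_top ?_ (ENNReal.tsum_le_tsum hTbound)
    rw [ENNReal.tsum_geometric]
    simp [ENNReal.one_sub_inv_two]
  have hBC : P (limsup T atTop) = 0 := measure_limsup_atTop_eq_zero hsum
  have hae : ∀ᵐ ω ∂P, ω ∉ limsup T atTop := by
    rw [ae_iff]
    simpa using hBC
  -- the index function and the sequence ε
  set κ : ℕ → ℕ := fun n => Nat.findGreatest (fun k => N' (2 * k) ≤ n) n with hκ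
  have hκ_spec : ∀ n, N' (2 * κ n) ≤ n := by
    intro n
    exact Nat.findGreatest_spec (P := fun k => N' (2 * k) ≤ n) (Nat.zero_le n)
      (by simp [hN'zero])
  have hκ_ge : ∀ k n, N' (2 * k) ≤ n → k ≤ κ n := by
    intro k n h
    exact Nat.le_findGreatest (le_trans (le_trans (by omega) (hN'ge (2 * k))) h) h
  have hκ_top : Tendsto κ atTop atTop :=
    tendsto_atTop.2 fun k => eventually_atTop.2 ⟨N' (2 * k), fun n hn => hκ_ge k n hn⟩
  set ε : ℕ → ℝ := fun n => (2⁻¹ : ℝ) ^ (κ n) with hε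
  have hεpos : ∀ n, 0 < ε n := fun n => pow_pos (by norm_num) _
  have hεtend : Tendsto ε atTop (nhds 0) :=
    (tendsto_pow_atTop_nhds_zero_of_lt_one (by norm_num) (by norm_num)).comp hκ_top
  have hε1 : ∀ n, |ε n| ≤ 1 := fun n => by
    rw [abs_of_pos (hεpos n)]
    exact pow_le_one₀ (by norm_num) (by norm_num)
  refine ⟨ε, ExistsDiag.diag ε hε1, hεpos, hεtend, fun y n => rfl, ?_⟩
  filter_upwards [hae] with ω hω
  rw [mem_limsup_iff_frequently_mem, not_frequently] at hω
  obtain ⟨K, hK⟩ := eventually_atTop.1 hω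
  -- eventual tail bound
  have htail : ∀ᶠ n in atTop, ‖ξ ω n‖ ≤ b (2 * κ n) := by
    filter_upwards [hκ_top.eventually (eventually_ge_atTop K)] with n hn
    have hKn : K ≤ 2 * κ n := le_trans hn (by omega)
    have hnot := hK (2 * κ n) hKn
    by_contra hc
    push_neg at hc
    exact hnot ⟨n, hκ_spec n, hc⟩
  have hytend : Tendsto (fun n => (ε n)⁻¹ • ξ ω n) atTop (nhds 0) := by
    refine squeeze_zero_norm' (a := fun n => b (κ n)) ?_ ?_
    · filter_upwards [htail] with n hn
      rw [norm_smul, Real.norm_eq_abs, abs_inv, abs_of_pos (hεpos n)]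
      calc (ε n)⁻¹ * ‖ξ ω n‖ ≤ (ε n)⁻¹ * b (2 * κ n) := by
            exact mul_le_mul_of_nonneg_left hn (inv_nonneg.2 (hεpos n).le)
        _ = b (κ n) := by
            show ((2⁻¹ : ℝ) ^ (κ n))⁻¹ * (2⁻¹ : ℝ) ^ (2 * κ n) = (2⁻¹ : ℝ) ^ (κ n)
            rw [two_mul, pow_add, ← mul_assoc,
              inv_mul_cancel₀ (pow_ne_zero _ (by norm_num)), one_mul]
    · exact (tendsto_pow_atTop_nhds_zero_of_lt_one (by norm_num) (by norm_num)).comp hκ_top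
  refine ⟨ExistsDiag.mk0 (fun n => (ε n)⁻¹ • ξ ω n) hytend, ?_⟩
  ext n
  show ξ ω n = ε n • (ε n)⁻¹ • ξ ω n
  rw [smul_smul, mul_inv_cancel₀ (hεpos n).ne', one_smul]
end
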